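/- arXiv:1802.04022 — 6 statements merged into one kernel-verified Lean document; each statement's English description precedes it below -/
import Mathlib

section
/- Let G(T) be the threshold graph on {1,…,n} with construction sequence T, and let 1 ≤ i < j ≤ n. Then d(i) = d(j) if and only if one of the following holds: (1) T(k) = 0 for all i ≤ k ≤ j; (2) T(k) = 1 for all i ≤ k ≤ j; (3) i = 1, T(1) = 0, and T(k) = 1 for all 2 ≤ k ≤ j. -/
open Finset Matrix Polynomial

/-- The threshold graph on `Fin n` (vertex `i` of the paper corresponds to `⟨i-1, _⟩ : Fin n`)
with construction sequence `T` : two distinct vertices are adjacent iff the later one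
(in the construction order) was added by a join operation. -/
def thresholdGraph (n : ℕ) (T : Fin n → Bool) : SimpleGraph (Fin n) where
  Adj i j := i ≠ j ∧ T (max i j) = true
  symm := by
    constructor
    intro i j h
    exact ⟨h.1.symm, by rw [max_comm]; exact h.2⟩
  loopless := by
    constructor
    intro i h
    exact h.1 rfl

instance thresholdGraph.instDecidableRelAdj (n : ℕ) (T : Fin n → Bool) :
    DecidableRel (thresholdGraph n T).Adj :=
  fun i j => decidable_of_iff (i ≠ j ∧ T (max i j) = true) Iff.rfl

/-! A vertex `v` is adjacent to the later vertices added by a join, and, if `v` was itself added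
by a join, to all `v` earlier vertices; hence `d(v) = #{u > v | T u} + [T v] v`. Comparing this
for `i < j`, the common term `#{u > j | T u}` cancels, and `d(i) = d(j)` becomes
`A + [T i] i = [T j] j` with `A = #{k ∈ (i, j] | T k} ≤ j - i`. Each case of `T i, T j` is then
arithmetic: both `0` forces `A = 0`, both `1` forces `A = j - i`, and `T i = 0`, `T j = 1` forces
`A = j`, i.e. `i = 0` and `A = j - i`; `T i = 1`, `T j = 0` would force `i = 0`, excluded by
`T 0 = 0`. -/

theorem Finset.card_filter_Ioi_eq_add_of_le {α : Type*} [LinearOrder α] [LocallyFiniteOrder α]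
    [LocallyFiniteOrderTop α] (p : α → Prop) [DecidablePred p] {a b : α} (hab : a ≤ b) :
    #{x ∈ Ioi a | p x} = #{x ∈ Ioc a b | p x} + #{x ∈ Ioi b | p x} := by
  have hunion : Ioc a b ∪ Ioi b = Ioi a := by
    rw [← coe_inj]
    push_cast
    exact Set.Ioc_union_Ioi_eq_Ioi hab
  have hdisj : Disjoint (Ioc a b) (Ioi b) := by
    rw [← disjoint_coe]
    push_cast
    exact Set.Ioc_disjoint_Ioi_same
  rw [← hunion, filter_union, card_union_of_disjoint (disjoint_filter_filter hdisj)]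

theorem Finset.forall_mem_Icc_iff {α : Type*} [PartialOrder α] [LocallyFiniteOrder α]
    {a b : α} (hab : a ≤ b) {P : α → Prop} :
    (∀ x ∈ Icc a b, P x) ↔ P a ∧ ∀ x ∈ Ioc a b, P x := by
  rw [Icc_eq_cons_Ioc hab, forall_mem_cons]

namespace thresholdGraph

variable {n : ℕ} (T : Fin n → Bool)

theorem adj_iff {u v : Fin n} :
    (thresholdGraph n T).Adj u v ↔ (u < v ∧ T v = true) ∨ (v < u ∧ T u = true) := by
  show u ≠ v ∧ T (max u v) = true ↔ _
  rcases lt_trichotomy u v with h | rfl | h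
  · simp [h.ne, max_eq_right h.le, h, h.not_gt]
  · simp
  · simp [h.ne', max_eq_left h.le, h, h.not_gt]

theorem degree_eq (v : Fin n) :
    (thresholdGraph n T).degree v = #{u ∈ Ioi v | T u = true} + if T v then (v : ℕ) else 0 := by
  have hsplit : (thresholdGraph n T).neighborFinset v =
      {u ∈ Ioi v | T u = true} ∪ if T v then Iio v else ∅ := by
    ext u
    cases hv : T v <;> simp [adj_iff, hv, and_comm]
  have hdisj : Disjoint {u ∈ Ioi v | T u = true} (if T v then Iio v else ∅) := by
    split_ifs
    exacts [(disjoint_Ioi_Iio v).mono_left (filter_subset _ _), disjoint_empty_right _]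
  rw [← SimpleGraph.card_neighborFinset_eq_degree, hsplit, card_union_of_disjoint hdisj]
  cases T v <;> simp

theorem degree_eq_degree_iff {i j : Fin n} (hij : i ≤ j) :
    (thresholdGraph n T).degree i = (thresholdGraph n T).degree j ↔
      #{k ∈ Ioc i j | T k = true} + (if T i then (i : ℕ) else 0) =
        if T j then (j : ℕ) else 0 := by
  rw [degree_eq, degree_eq, card_filter_Ioi_eq_add_of_le _ hij]
  omega

end thresholdGraph

/-- two vertices `i < j` of a threshold graph have the same degree iff the
construction sequence is constant on `[i, j]`, or `i` is the first vertex (paper vertex 1,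
i.e. `(i : ℕ) = 0`), `T(i) = 0`, and `T(k) = 1` for all later `k ≤ j`. -/
theorem degree_eq_iff_thresholdGraph (n : ℕ) (T : Fin n → Bool) (hn : 0 < n)
    (hT1 : T ⟨0, hn⟩ = false) (i j : Fin n) (hij : i < j) :
    (thresholdGraph n T).degree i = (thresholdGraph n T).degree j ↔
      ((∀ k : Fin n, i ≤ k → k ≤ j → T k = false) ∨
       (∀ k : Fin n, i ≤ k → k ≤ j → T k = true) ∨
       ((i : ℕ) = 0 ∧ T i = false ∧ ∀ k : Fin n, i < k → k ≤ j → T k = true)) := by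
  rw [thresholdGraph.degree_eq_degree_iff T hij.le]
  set A := #{k ∈ Ioc i j | T k = true}
  have hA_le : A ≤ j - i := Fin.card_Ioc i j ▸ card_filter_le _ _
  have hj_mem : j ∈ Ioc i j := right_mem_Ioc.2 hij
  have hlater_true : (∀ k, i < k → k ≤ j → T k = true) ↔ A = j - i := by
    rw [← Fin.card_Ioc, card_filter_eq_iff]
    simp only [mem_Ioc, and_imp]
  have hlater_false : (∀ k, i < k → k ≤ j → T k = false) ↔ A = 0 := by
    rw [card_filter_eq_zero_iff]
    simp only [mem_Ioc, and_imp, Bool.not_eq_true]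
  have hTj_true : T j = true → 0 < A := fun h => card_pos.2 ⟨j, mem_filter.2 ⟨hj_mem, h⟩⟩
  have hTj_false : T j = false → A < j - i := fun h =>
    Fin.card_Ioc i j ▸ card_lt_card (filter_ssubset.2 ⟨j, hj_mem, by simp [h]⟩)
  have hi_pos : T i = true → (i : ℕ) ≠ 0 := fun h h0 => by
    rw [show i = ⟨0, hn⟩ from Fin.ext h0, hT1] at h
    exact Bool.false_ne_true h
  have hall (b : Bool) : (∀ k, i ≤ k → k ≤ j → T k = b) ↔
      T i = b ∧ ∀ k, i < k → k ≤ j → T k = b := by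
    simpa only [mem_Icc, mem_Ioc, and_imp] using forall_mem_Icc_iff hij.le (P := (T · = b))
  rw [hall, hall, hlater_true, hlater_false]
  cases hi : T i <;> cases hj : T j <;> simp [hi, hj] at hTj_true hTj_false hi_pos ⊢ <;> omega
end

section
/- Let G(T) be the threshold graph on {1,…,n} with construction sequence T, with degrees d(1),…,d(n). Then the characteristic polynomial of its Laplacian matrix L equals ∏_{i=1}^{n} (X − c_i), where c_i = |{j ∈ {1,…,n} : d(j) ≥ i}|. Equivalently, the multiset of Laplacian eigenvalues of G(T) is the conjugate of its degree sequence: the i-th largest eigenvalue λ_{n−i+1} equals |{j : d(j) ≥ i}| for 1 ≤ i ≤ n. -/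
/-!
Build `G(T)` one vertex at a time. An isolated new vertex adds the eigenvalue `0` and a zero
part to the conjugate of the degree sequence. A dominating new vertex turns the Laplacian `L`
of the old graph on `n` vertices into `[[L + 1, -𝟙], [-𝟙ᵀ, n]]`; as `L 𝟙 = 0`, one column
operation gives `χ(X) (X - 1) = X (X - n - 1) χ_L(X - 1)`. On the degree side every old degree
grows by one and a vertex of degree `n` appears, which shifts the conjugate sequence by one and
puts `n + 1` in front, matching the factor `X - (n + 1)`.
-/

open Finset Matrix Polynomial

namespace Matrix
variable {ι R : Type*} [Fintype ι] [DecidableEq ι] [CommRing R]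

theorem charmatrix_mulVec_const {M : Matrix ι ι R} {c : R}
    (h : M *ᵥ (fun _ => 1) = fun _ => c) :
    charmatrix M *ᵥ (fun _ => 1) = fun _ => X - C c := by
  ext i
  have hi := congrFun h i
  simp only [mulVec, dotProduct, mul_one] at hi ⊢
  simp [charmatrix_apply, sum_sub_distrib, ← hi, diagonal_apply]

theorem det_fromBlocks_replicateCol_one_mul {K : Matrix ι ι R} {a : R}
    (hK : K *ᵥ (fun _ => 1) = fun _ => a) (d : R) :
    (fromBlocks K (replicateCol (Fin 1) fun _ => 1) (replicateRow (Fin 1) fun _ => 1)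
        (of fun _ _ => d)).det * a = K.det * (d * a - Fintype.card ι) := by
  -- As `K 𝟙 = a 𝟙`, right multiplication by `[[1, 𝟙], [0, -a]]` clears the upper right block.
  have hprod : fromBlocks K (replicateCol (Fin 1) fun _ => 1) (replicateRow (Fin 1) fun _ => 1)
        (of fun _ _ => d) * fromBlocks 1 (replicateCol (Fin 1) fun _ => 1) 0 (of fun _ _ => -a) =
      fromBlocks K 0 (replicateRow (Fin 1) fun _ => 1) (of fun _ _ => Fintype.card ι - d * a) := by
    rw [fromBlocks_multiply]
    congr 1
    · simp
    · ext i j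
      have hi := congrFun hK i
      simp only [mulVec, dotProduct, mul_one] at hi
      simp [mul_apply, hi]
    · simp
    · ext i j
      simp [mul_apply]
      ring
  have hdet : (fromBlocks (1 : Matrix ι ι R) (replicateCol (Fin 1) fun _ => 1) 0
      (of fun _ _ => -a)).det = -a := by
    simp [det_fromBlocks_zero₂₁]
  have h := congrArg det hprod
  simp only [det_mul, hdet, det_fromBlocks_zero₁₂, det_unique, of_apply] at h
  linear_combination -h

theorem charpoly_fromBlocks_add_one_mul {A : Matrix ι ι R} (hA : A *ᵥ (fun _ => 1) = 0) :
    (fromBlocks (A + 1) (replicateCol (Fin 1) fun _ => -1) (replicateRow (Fin 1) fun _ => -1)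
        (of fun _ _ => (Fintype.card ι : R))).charpoly * (X - 1) =
      X * (X - C ((Fintype.card ι : R) + 1)) * A.charpoly.comp (X - 1) := by
  have hrow : charmatrix (A + 1) *ᵥ (fun _ => 1) = fun _ => X - 1 := by
    have h1 : (A + 1) *ᵥ (fun _ => 1) = fun _ => 1 := by simp [add_mulVec, hA]
    simpa only [map_one] using charmatrix_mulVec_const h1
  have hshift : (A + 1).charpoly = A.charpoly.comp (X - 1) := by
    simpa [sub_eq_add_neg] using charpoly_sub_scalar A (-1)
  have hblocks : charmatrix (fromBlocks (A + 1) (replicateCol (Fin 1) fun _ => -1)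
      (replicateRow (Fin 1) fun _ => -1) (of fun _ _ => (Fintype.card ι : R))) =
      fromBlocks (charmatrix (A + 1)) (replicateCol (Fin 1) fun _ => 1)
        (replicateRow (Fin 1) fun _ => 1) (of fun _ _ => X - C (Fintype.card ι : R)) := by
    rw [charmatrix_fromBlocks]
    congr 1
    · ext : 1; simp
    · ext : 1; simp
    · ext i j : 1; simp [Subsingleton.elim i j]
  rw [charpoly, hblocks, det_fromBlocks_replicateCol_one_mul hrow, ← charpoly, hshift]
  simp only [map_add, map_natCast, C_1]
  ring

end Matrix

theorem finSumFinEquiv_inl_fin_one {n : ℕ} (i : Fin n) :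
    finSumFinEquiv (Sum.inl i : Fin n ⊕ Fin 1) = i.castSucc :=
  rfl

theorem finSumFinEquiv_inr_fin_one {n : ℕ} (i : Fin 1) :
    finSumFinEquiv (Sum.inr i : Fin n ⊕ Fin 1) = Fin.last n := by
  simp [Fin.fin_one_eq_zero i, Fin.ext_iff]

namespace thresholdGraph
variable {n : ℕ} (T : Fin (n + 1) → Bool)

theorem adj_castSucc_castSucc {i j : Fin n} :
    (thresholdGraph (n + 1) T).Adj i.castSucc j.castSucc ↔
      (thresholdGraph n (Fin.init T)).Adj i j := by
  simp [thresholdGraph, Fin.init, Fin.strictMono_castSucc.monotone.map_max]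

theorem adj_castSucc_last {i : Fin n} :
    (thresholdGraph (n + 1) T).Adj i.castSucc (Fin.last n) ↔ T (Fin.last n) = true := by
  simp [thresholdGraph, (Fin.castSucc_lt_last i).ne, Fin.le_last]

theorem degree_castSucc (i : Fin n) :
    (thresholdGraph (n + 1) T).degree i.castSucc =
      (thresholdGraph n (Fin.init T)).degree i + if T (Fin.last n) then 1 else 0 := by
  simp only [← SimpleGraph.card_neighborFinset_eq_degree, SimpleGraph.neighborFinset_eq_filter,
    card_filter, Fin.sum_univ_castSucc, adj_castSucc_castSucc, adj_castSucc_last]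

theorem degree_last :
    (thresholdGraph (n + 1) T).degree (Fin.last n) = if T (Fin.last n) then n else 0 := by
  simp only [← SimpleGraph.card_neighborFinset_eq_degree, SimpleGraph.neighborFinset_eq_filter,
    card_filter, Fin.sum_univ_castSucc, SimpleGraph.adj_comm _ (Fin.last n), adj_castSucc_last,
    SimpleGraph.irrefl, if_false, add_zero]
  split_ifs <;> simp

variable (R : Type*) [Ring R]

theorem lapMatrix_submatrix_of_last_eq_false (h : T (Fin.last n) = false) :
    ((thresholdGraph (n + 1) T).lapMatrix R).submatrix finSumFinEquiv finSumFinEquiv =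
      fromBlocks ((thresholdGraph n (Fin.init T)).lapMatrix R) 0 0 0 := by
  ext (i | i) (j | j) <;>
    simp only [submatrix_apply, finSumFinEquiv_inl_fin_one, finSumFinEquiv_inr_fin_one] <;>
    simp [SimpleGraph.lapMatrix, SimpleGraph.degMatrix, diagonal_apply, h, degree_castSucc,
      degree_last, adj_castSucc_castSucc, adj_castSucc_last, SimpleGraph.adj_comm _ (Fin.last n)]

theorem lapMatrix_submatrix_of_last_eq_true (h : T (Fin.last n) = true) :
    ((thresholdGraph (n + 1) T).lapMatrix R).submatrix finSumFinEquiv finSumFinEquiv =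
      fromBlocks ((thresholdGraph n (Fin.init T)).lapMatrix R + 1)
        (replicateCol (Fin 1) fun _ => -1) (replicateRow (Fin 1) fun _ => -1)
        (of fun _ _ => (n : R)) := by
  ext (i | i) (j | j) <;>
    simp only [submatrix_apply, finSumFinEquiv_inl_fin_one, finSumFinEquiv_inr_fin_one] <;>
    simp [SimpleGraph.lapMatrix, SimpleGraph.degMatrix, diagonal_apply, one_apply, h,
      degree_castSucc, degree_last, adj_castSucc_castSucc, adj_castSucc_last,
      SimpleGraph.adj_comm _ (Fin.last n), (Fin.castSucc_lt_last _).ne']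
  split_ifs <;> abel

end thresholdGraph

-- `conjugate d i` is the paper's `c_{i+1}`: indices are shifted to start at `0`.
def conjugate {ι : Type*} [Fintype ι] (d : ι → ℕ) (i : ℕ) : ℕ :=
  #{j | i < d j}

section conjugate
variable {ι : Type*} [Fintype ι]

theorem conjugate_eq_zero {d : ι → ℕ} {i : ℕ} (h : ∀ j, d j ≤ i) : conjugate d i = 0 := by
  simp [conjugate, filter_eq_empty_iff, h]

theorem conjugate_add_one_zero (d : ι → ℕ) :
    conjugate (fun j => d j + 1) 0 = Fintype.card ι := by
  simp [conjugate]

theorem conjugate_add_one_succ (d : ι → ℕ) (i : ℕ) :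
    conjugate (fun j => d j + 1) (i + 1) = conjugate d i := by
  simp [conjugate]

theorem conjugate_fin_succ {n : ℕ} (d : Fin (n + 1) → ℕ) (i : ℕ) :
    conjugate d i = conjugate (Fin.init d) i + if i < d (Fin.last n) then 1 else 0 := by
  rw [conjugate, conjugate, card_filter, card_filter, Fin.sum_univ_castSucc]
  rfl

variable {R : Type*} [CommRing R] {n : ℕ} {d : Fin (n + 1) → ℕ} {d₀ : Fin n → ℕ}

theorem prod_conjugate_of_last_eq_zero (hd₀ : ∀ j, d₀ j < n) (hinit : Fin.init d = d₀)
    (hlast : d (Fin.last n) = 0) :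
    ∏ i : Fin (n + 1), (X - C (conjugate d i : R)) =
      (∏ i : Fin n, (X - C (conjugate d₀ i : R))) * X := by
  have hd : ∀ i, conjugate d i = conjugate d₀ i := by simp [conjugate_fin_succ d, hinit, hlast]
  rw [Fin.prod_univ_castSucc]
  simp [hd, conjugate_eq_zero fun j => (hd₀ j).le]

theorem prod_conjugate_mul_X_sub_one (hd₀ : ∀ j, d₀ j < n)
    (hinit : Fin.init d = fun j => d₀ j + 1) (hlast : d (Fin.last n) = n) :
    (∏ i : Fin (n + 1), (X - C (conjugate d i : R))) * (X - 1) =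
      X * (X - C ((n : R) + 1)) * (∏ i : Fin n, (X - C (conjugate d₀ i : R))).comp (X - 1) := by
  cases n with
  | zero =>
    have h0 : conjugate d 0 = 0 :=
      conjugate_eq_zero fun j => by rw [Fin.fin_one_eq_zero j, ← Fin.last_zero, hlast]
    simp [h0]
  | succ m =>
    have hsucc (i : ℕ) : conjugate d (i + 1) = conjugate d₀ i + if i < m then 1 else 0 := by
      simp [conjugate_fin_succ d, hinit, conjugate_add_one_succ, hlast]
    have h0 : conjugate d 0 = m + 2 := by
      simp [conjugate_fin_succ d, hinit, conjugate_add_one_zero, hlast]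
    have htop₀ : conjugate d₀ m = 0 := conjugate_eq_zero fun j => Nat.le_of_lt_succ (hd₀ j)
    have htop : conjugate d (m + 1) = 0 := by simp [hsucc, htop₀]
    have hmid (i : Fin m) :
        X - C (conjugate d (i + 1) : R) = (X - C (conjugate d₀ i : R)).comp (X - 1) := by
      simp [hsucc, i.is_lt]
      ring
    rw [Fin.prod_univ_succ, Fin.prod_univ_castSucc, Polynomial.prod_comp, Fin.prod_univ_castSucc]
    simp only [Fin.val_zero, Fin.val_succ, Fin.val_castSucc, Fin.val_last, h0, hmid, htop, htop₀,
      sub_comp, X_comp, C_comp]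
    simp only [Nat.cast_zero, map_zero, sub_zero, Nat.cast_add, Nat.cast_ofNat, Nat.cast_one,
      map_add, map_natCast, map_ofNat, C_1]
    ring

end conjugate

theorem charpoly_lapMatrix_thresholdGraph (R : Type*) [CommRing R] (n : ℕ) (T : Fin n → Bool) :
    ((thresholdGraph n T).lapMatrix R).charpoly =
      ∏ i : Fin n, (X - C (conjugate (fun j => (thresholdGraph n T).degree j) i : R)) := by
  induction n with
  | zero => simp
  | succ n ih =>
    have hdeg (j : Fin n) : (thresholdGraph n (Fin.init T)).degree j < n := by
      simpa using (thresholdGraph n (Fin.init T)).degree_lt_card_verts j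
    rw [← charpoly_reindex finSumFinEquiv.symm, reindex_apply, Equiv.symm_symm]
    cases hT : T (Fin.last n)
    · rw [thresholdGraph.lapMatrix_submatrix_of_last_eq_false T R hT,
        charpoly_fromBlocks_zero₁₂, ih, charpoly_zero, Fintype.card_fin, pow_one]
      refine (prod_conjugate_of_last_eq_zero hdeg ?_ ?_).symm
      · ext j; simp [Fin.init, thresholdGraph.degree_castSucc, hT]
      · simp [thresholdGraph.degree_last, hT]
    · apply (monic_X_sub_C (1 : R)).isRegular.right
      simp only [map_one]
      have hcone := charpoly_fromBlocks_add_one_mul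
        ((thresholdGraph n (Fin.init T)).lapMatrix_mulVec_const_eq_zero (R := R))
      rw [Fintype.card_fin] at hcone
      rw [thresholdGraph.lapMatrix_submatrix_of_last_eq_true T R hT, hcone, ih,
        prod_conjugate_mul_X_sub_one hdeg]
      · ext j; simp [Fin.init, thresholdGraph.degree_castSucc, hT]
      · simp [thresholdGraph.degree_last, hT]

theorem charpoly_thresholdGraph_conjugate_degrees_general (n : ℕ) (T : Fin n → Bool) :
    ((thresholdGraph n T).lapMatrix ℝ).charpoly =
      ∏ i : Fin n,
        (X - C (((Finset.univ.filter
          (fun j : Fin n => (i : ℕ) + 1 ≤ (thresholdGraph n T).degree j)).card : ℝ))) :=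
  charpoly_lapMatrix_thresholdGraph ℝ n T

/-- the characteristic polynomial of the Laplacian of a threshold graph is
`∏_{i=1}^{n} (X − c_i)` where `c_i = |{j : d(j) ≥ i}|`; i.e. the Laplacian spectrum is the
conjugate of the degree sequence. (Paper index `i ∈ {1,…,n}` corresponds to `i : Fin n`
via `i ↦ (i : ℕ) + 1`.) -/
theorem charpoly_thresholdGraph_conjugate_degrees (n : ℕ) (T : Fin n → Bool) (hn : 0 < n)
    (hT1 : T ⟨0, hn⟩ = false) :
    ((thresholdGraph n T).lapMatrix ℝ).charpoly =
      ∏ i : Fin n,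
        (X - C (((Finset.univ.filter
          (fun j : Fin n => (i : ℕ) + 1 ≤ (thresholdGraph n T).degree j)).card : ℝ))) :=
  charpoly_thresholdGraph_conjugate_degrees_general n T
end

section
/- Let G(T) be the threshold graph on {1,…,n} with construction sequence T and Laplacian matrix L. For every i with 2 ≤ i ≤ n, the vector C(i−1) ∈ ℝ^n satisfies L·C(i−1) = (d(i) + [T(i) = 1])·C(i−1), where [T(i) = 1] denotes 1 if T(i) = 1 and 0 otherwise; that is, C(i−1) is an eigenvector of L with eigenvalue d(i) if T(i) = 0 and with eigenvalue d(i) + 1 if T(i) = 1. -/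
open Finset Matrix Polynomial

/-- `Cvec n k` is the vector `C(k) ∈ ℝ^n` of the paper: its first `k` entries equal `1`, its
`(k+1)`-st entry equals `−k`, and its remaining entries equal `0` (0-indexed over `Fin n`). -/
def Cvec (n k : ℕ) : Fin n → ℝ := fun j =>
  if (j : ℕ) < k then 1 else if (j : ℕ) = k then -(k : ℝ) else 0

/-! In a threshold graph each vertex after `k` is adjacent to all or none of the first `k + 1`
vertices, and vertex `k` to all or none of the first `k`. So, with `S` the first `k` vertices and
`v = k`, the vertices of `S ∪ {v}` have the same neighbours outside `S ∪ {v}`, and `v` is adjacent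
to all or none of `S`. In any graph with this configuration `f = 𝟙_S - |S| e_v` is a Laplacian
eigenvector with eigenvalue `d(v) + [v ~ S]`: writing `(L f) u = ∑_{w ~ u} (f u - f w)`, the value
vanishes outside `S ∪ {v}` because `f` sums to zero on `S ∪ {v}`; it is `-|S| (d(v) + [v ~ S])`
at `v`; and at `u ∈ S` only `v` and the common outside neighbours contribute, giving
`(|S| + 1) [v ~ S] + (d(v) - |S| [v ~ S])`. -/

theorem Finset.sum_ite_mem_ite_eq_neg_card {V R : Type*} [DecidableEq V] [CommRing R]
    (A S : Finset V) {v : V} (hv : v ∉ S) :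
    ∑ u ∈ A, (if u ∈ S then 1 else if u = v then -(#S : R) else 0) =
      #(A ∩ S) - if v ∈ A then (#S : R) else 0 := by
  have hsplit : ∀ u, (if u ∈ S then 1 else if u = v then -(#S : R) else 0) =
      (if u ∈ S then 1 else 0) + if u = v then -(#S : R) else 0 := by
    intro u
    by_cases hu : u ∈ S
    · simp [hu, ne_of_mem_of_not_mem hu hv]
    · simp [hu]
  simp_rw [hsplit, sum_add_distrib, sum_boole, filter_mem_eq_inter, sum_ite_eq']
  split_ifs <;> simp [sub_eq_add_neg]

namespace SimpleGraph

variable {V : Type*} [Fintype V] [DecidableEq V] (G : SimpleGraph V) [DecidableRel G.Adj]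

theorem card_neighborFinset_inter_of_forall_adj_iff {w : V} {S : Finset V} {P : Prop}
    [Decidable P] (h : ∀ u ∈ S, (G.Adj w u ↔ P)) :
    #(G.neighborFinset w ∩ S) = if P then #S else 0 := by
  split_ifs with hP
  · exact congrArg card (inter_eq_right.2 fun u hu => by simpa [hP] using h u hu)
  · exact card_eq_zero.2 (disjoint_iff_inter_eq_empty.1 <| disjoint_right.2 fun u hu => by
      simpa [hP] using h u hu)

theorem card_neighborFinset_sdiff_eq_card_sdiff_insert_add (w v : V) (S : Finset V)
    (hv : v ∉ S) :
    #(G.neighborFinset w \ S) =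
      #(G.neighborFinset w \ insert v S) + if G.Adj w v then 1 else 0 := by
  rw [sdiff_insert]
  split_ifs with h
  · rw [card_erase_add_one]; simp [h, hv]
  · rw [erase_eq_of_notMem (by simp [h]), add_zero]

theorem lapMatrix_mulVec_ite_mem_ite_eq_neg_card {R : Type*} [CommRing R] {S : Finset V} {v : V}
    (hv : v ∉ S) {P : Prop} [Decidable P] (hvS : ∀ u ∈ S, (G.Adj v u ↔ P))
    (hout : ∀ w ∉ S, w ≠ v → ∀ u ∈ S, (G.Adj w u ↔ G.Adj w v)) :
    G.lapMatrix R *ᵥ (fun w => if w ∈ S then 1 else if w = v then -(#S : R) else 0) =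
      ((G.degree v : R) + if P then 1 else 0) •
        fun w => if w ∈ S then 1 else if w = v then -(#S : R) else 0 := by
  funext j
  rw [lapMatrix_mulVec_apply, Finset.sum_ite_mem_ite_eq_neg_card _ _ hv, Pi.smul_apply, smul_eq_mul]
  simp only [mem_neighborFinset]
  by_cases hj : j ∈ S
  · have hjv : G.Adj j v ↔ P := (G.adj_comm j v).trans (hvS j hj)
    have hsame : G.neighborFinset j \ insert v S = G.neighborFinset v \ insert v S := by
      ext w
      simp only [mem_sdiff, mem_neighborFinset, mem_insert, not_or]
      refine and_congr_left fun ⟨hwv, hwS⟩ => ?_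
      rw [G.adj_comm j, G.adj_comm v]
      exact hout w hwS hwv j hj
    rw [← card_neighborFinset_eq_degree, ← card_neighborFinset_eq_degree,
      ← card_inter_add_card_sdiff (G.neighborFinset j) S,
      ← card_inter_add_card_sdiff (G.neighborFinset v) S,
      G.card_neighborFinset_sdiff_eq_card_sdiff_insert_add j v S hv,
      G.card_neighborFinset_sdiff_eq_card_sdiff_insert_add v v S hv, hsame,
      G.card_neighborFinset_inter_of_forall_adj_iff hvS]
    simp only [hj, hjv, if_true, G.loopless.irrefl v, if_false]
    split_ifs <;> push_cast <;> ring
  by_cases hjv : j = v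
  · subst hjv
    rw [G.card_neighborFinset_inter_of_forall_adj_iff hvS]
    simp only [hj, if_true, if_false, G.loopless.irrefl j]
    split_ifs <;> push_cast <;> ring
  · rw [G.card_neighborFinset_inter_of_forall_adj_iff (hout j hj hjv)]
    simp only [hj, hjv, if_false]
    split_ifs <;> push_cast <;> ring

end SimpleGraph

theorem thresholdGraph_adj_of_lt {n : ℕ} {T : Fin n → Bool} {u w : Fin n} (h : u < w) :
    (thresholdGraph n T).Adj w u ↔ T w = true := by
  simp [thresholdGraph, h.ne', max_eq_left h.le]

theorem Cvec_eq_ite_mem_Iio {n : ℕ} (i : Fin n) :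
    Cvec n i = fun w => if w ∈ Iio i then 1 else if w = i then -(#(Iio i) : ℝ) else 0 := by
  funext w
  simp [Cvec, Fin.ext_iff]

theorem lapMatrix_mulVec_Cvec_thresholdGraph_general (n : ℕ) (T : Fin n → Bool) (i : Fin n) :
    (thresholdGraph n T).lapMatrix ℝ *ᵥ Cvec n (i : ℕ) =
      (((thresholdGraph n T).degree i : ℝ) + (if T i = true then 1 else 0)) •
        Cvec n (i : ℕ) := by
  rw [Cvec_eq_ite_mem_Iio]
  refine (thresholdGraph n T).lapMatrix_mulVec_ite_mem_ite_eq_neg_card (by simp)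
    (fun u hu => thresholdGraph_adj_of_lt (mem_Iio.1 hu)) fun w hw hwi u hu => ?_
  have hiw : i < w := lt_of_le_of_ne (not_lt.1 (mem_Iio.not.1 hw)) (Ne.symm hwi)
  rw [thresholdGraph_adj_of_lt ((mem_Iio.1 hu).trans hiw), thresholdGraph_adj_of_lt hiw]

/-- for every vertex `i` other than the first one (paper vertices `2 ≤ i ≤ n`),
the vector `C(i−1)` is an eigenvector of the Laplacian of the threshold graph with eigenvalue
`d(i) + [T(i) = 1]`. (Paper vertex `i` is `i : Fin n` with `(i : ℕ) = i − 1 ≥ 1`.) -/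
theorem lapMatrix_mulVec_Cvec_thresholdGraph (n : ℕ) (T : Fin n → Bool) (hn : 0 < n)
    (hT1 : T ⟨0, hn⟩ = false) (i : Fin n) (hi : (i : ℕ) ≠ 0) :
    (thresholdGraph n T).lapMatrix ℝ *ᵥ Cvec n (i : ℕ) =
      (((thresholdGraph n T).degree i : ℝ) + (if T i = true then 1 else 0)) •
        Cvec n (i : ℕ) :=
  lapMatrix_mulVec_Cvec_thresholdGraph_general n T i
end

section
/- Let G(T) be the threshold graph on {1,…,n} with construction sequence T and Laplacian matrix L. If two distinct vertices i < j satisfy d(i) = d(j), then the vector e_i − e_j (where e_k is the k-th standard basis vector of ℝ^n) is an eigenvector of L: L·(e_i − e_j) = (d(i) + a)·(e_i − e_j), where a = 1 if i and j are adjacent in G(T) and a = 0 otherwise. -/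
/-!
In a threshold graph, the neighbourhoods of `i < j` with `i` and `j` themselves removed are
nested (which one is larger depends on whether `j` was added by a join), so equal degrees make
them equal: `i` and `j` are twins. For twins `u`, `v` the adjacency matrix maps `e_u - e_v` to
`-[u ~ v] (e_u - e_v)` and the degree matrix scales it by the common degree.
-/

open Finset Matrix Polynomial

namespace SimpleGraph

variable {V : Type*} [Fintype V] [DecidableEq V] (G : SimpleGraph V) [DecidableRel G.Adj]
  {u v : V}

theorem card_neighborFinset_erase :
    ((G.neighborFinset u).erase v).card = G.degree u - if G.Adj u v then 1 else 0 := by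
  rw [Finset.card_erase_eq_ite, card_neighborFinset_eq_degree]
  simp only [mem_neighborFinset]
  split_ifs <;> rfl

theorem neighborFinset_erase_eq_of_subset
    (hsub : (G.neighborFinset u).erase v ⊆ (G.neighborFinset v).erase u)
    (hdeg : G.degree u = G.degree v) :
    (G.neighborFinset u).erase v = (G.neighborFinset v).erase u :=
  Finset.eq_of_subset_of_card_le hsub <| by
    simp only [card_neighborFinset_erase, hdeg, G.adj_comm v u, le_refl]

theorem degree_eq_of_neighborFinset_erase_eq
    (h : (G.neighborFinset u).erase v = (G.neighborFinset v).erase u) :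
    G.degree u = G.degree v := by
  have hcard := congrArg Finset.card h
  simp only [card_neighborFinset_erase, G.adj_comm v u] at hcard
  split_ifs at hcard with hadj
  · have := (G.degree_pos_iff_exists_adj u).2 ⟨v, hadj⟩
    have := (G.degree_pos_iff_exists_adj v).2 ⟨u, hadj.symm⟩
    omega
  · simpa using hcard

theorem adj_iff_of_neighborFinset_erase_eq
    (h : (G.neighborFinset u).erase v = (G.neighborFinset v).erase u) {w : V}
    (hwu : w ≠ u) (hwv : w ≠ v) : G.Adj w u ↔ G.Adj w v := by
  have := congrArg (w ∈ ·) h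
  simpa [hwu, hwv, G.adj_comm w] using this

variable {R : Type*} [Ring R]

theorem adjMatrix_mulVec_single_sub_single
    (h : (G.neighborFinset u).erase v = (G.neighborFinset v).erase u) :
    G.adjMatrix R *ᵥ (Pi.single u 1 - Pi.single v 1) =
      -(if G.Adj u v then 1 else 0 : R) • (Pi.single u 1 - Pi.single v 1) := by
  ext w
  simp only [mulVec_sub, mulVec_single_one, Pi.sub_apply, col_apply, adjMatrix_apply,
    Pi.smul_apply, Pi.single_apply, smul_eq_mul]
  by_cases hwu : w = u
  · subst hwu; by_cases hwv : w = v <;> simp [hwv]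
  by_cases hwv : w = v
  · subst hwv; simp [hwu, G.adj_comm w u]
  simp [hwu, hwv, G.adj_iff_of_neighborFinset_erase_eq h hwu hwv]

theorem lapMatrix_mulVec_single_sub_single
    (h : (G.neighborFinset u).erase v = (G.neighborFinset v).erase u) :
    G.lapMatrix R *ᵥ (Pi.single u 1 - Pi.single v 1) =
      ((G.degree u : R) + if G.Adj u v then 1 else 0) • (Pi.single u 1 - Pi.single v 1) := by
  have hdeg : G.degMatrix R *ᵥ (Pi.single u 1 - Pi.single v 1) =
      (G.degree u : R) • (Pi.single u 1 - Pi.single v 1) := by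
    rw [degMatrix, mulVec_sub, diagonal_mulVec_single, diagonal_mulVec_single,
      G.degree_eq_of_neighborFinset_erase_eq h, smul_sub,
      ← smul_eq_mul, Pi.single_smul', Pi.single_smul']
  rw [lapMatrix, sub_mulVec, hdeg, G.adjMatrix_mulVec_single_sub_single h, neg_smul,
    sub_neg_eq_add, add_smul]

end SimpleGraph

section ThresholdGraph

variable {n : ℕ} {T : Fin n → Bool} {i j : Fin n}

theorem thresholdGraph_adj_iff : (thresholdGraph n T).Adj i j ↔ i ≠ j ∧ T (max i j) = true :=
  Iff.rfl

theorem thresholdGraph_neighborFinset_erase_subset_of_join (hij : i < j) (hTj : T j = true) :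
    ((thresholdGraph n T).neighborFinset i).erase j ⊆
      ((thresholdGraph n T).neighborFinset j).erase i := by
  intro k
  simp only [Finset.mem_erase, SimpleGraph.mem_neighborFinset, thresholdGraph_adj_iff]
  rintro ⟨hkj, hik, hT⟩
  refine ⟨fun hki => hik hki.symm, Ne.symm hkj, ?_⟩
  rcases lt_or_gt_of_ne hkj with hkj | hjk
  · rwa [max_eq_left hkj.le]
  · rwa [max_eq_right hjk.le, ← max_eq_right (hij.trans hjk).le]

theorem thresholdGraph_neighborFinset_erase_subset_of_isolated (hij : i < j) (hTj : T j = false) :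
    ((thresholdGraph n T).neighborFinset j).erase i ⊆
      ((thresholdGraph n T).neighborFinset i).erase j := by
  intro k
  simp only [Finset.mem_erase, SimpleGraph.mem_neighborFinset, thresholdGraph_adj_iff]
  rintro ⟨hki, hjk, hT⟩
  rcases lt_or_gt_of_ne hjk with hjk | hkj
  · rw [max_eq_right hjk.le] at hT
    exact ⟨hjk.ne', fun hik => hki hik.symm, by rwa [max_eq_right (hij.trans hjk).le]⟩
  · rw [max_eq_left hkj.le, hTj] at hT
    exact absurd hT Bool.false_ne_true

theorem thresholdGraph_neighborFinset_erase_eq_of_degree_eq (hij : i < j)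
    (hdeg : (thresholdGraph n T).degree i = (thresholdGraph n T).degree j) :
    ((thresholdGraph n T).neighborFinset i).erase j =
      ((thresholdGraph n T).neighborFinset j).erase i := by
  cases hTj : T j
  · exact ((thresholdGraph n T).neighborFinset_erase_eq_of_subset
      (thresholdGraph_neighborFinset_erase_subset_of_isolated hij hTj) hdeg.symm).symm
  · exact (thresholdGraph n T).neighborFinset_erase_eq_of_subset
      (thresholdGraph_neighborFinset_erase_subset_of_join hij hTj) hdeg

end ThresholdGraph

theorem lapMatrix_single_sub_single_thresholdGraph_general (n : ℕ) (T : Fin n → Bool)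
    (i j : Fin n) (hij : i < j)
    (hdeg : (thresholdGraph n T).degree i = (thresholdGraph n T).degree j) :
    (thresholdGraph n T).lapMatrix ℝ *ᵥ (Pi.single i 1 - Pi.single j 1) =
      (((thresholdGraph n T).degree i : ℝ) +
          (if (thresholdGraph n T).Adj i j then 1 else 0)) •
        (Pi.single i 1 - Pi.single j 1) :=
  (thresholdGraph n T).lapMatrix_mulVec_single_sub_single
    (thresholdGraph_neighborFinset_erase_eq_of_degree_eq hij hdeg)

/-- if two distinct vertices `i < j` of a threshold graph have the same degree,
then `e_i − e_j` is an eigenvector of the Laplacian with eigenvalue `d(i) + a`, where `a = 1`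
if `i` and `j` are adjacent and `a = 0` otherwise. -/
theorem lapMatrix_single_sub_single_thresholdGraph (n : ℕ) (T : Fin n → Bool) (hn : 0 < n)
    (hT1 : T ⟨0, hn⟩ = false) (i j : Fin n) (hij : i < j)
    (hdeg : (thresholdGraph n T).degree i = (thresholdGraph n T).degree j) :
    (thresholdGraph n T).lapMatrix ℝ *ᵥ (Pi.single i 1 - Pi.single j 1) =
      (((thresholdGraph n T).degree i : ℝ) +
          (if (thresholdGraph n T).Adj i j then 1 else 0)) •
        (Pi.single i 1 - Pi.single j 1) :=
  lapMatrix_single_sub_single_thresholdGraph_general n T i j hij hdeg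
end

section
/- Let D ∈ ℝ^{n×n} be a diagonal matrix and B ∈ ℝ^{n×m}. Then the following are equivalent: (i) for every real number λ and every nonzero vector v ∈ ℝ^n with D·v = λ·v, one has Bᵀ·v ≠ 0; (ii) for every real number λ, the family of rows {B_{i,:} : i ∈ {1,…,n}, D_{ii} = λ} of B is linearly independent in ℝ^m. (That is, the pair (D, B) passes the PBH controllability test if and only if the rows of B associated with equal diagonal entries of D are linearly independent.) -/
open Finset Matrix

/-- PBH test for diagonal matrices: for a diagonal matrix `D = diagonal d` and
`B ∈ ℝ^{n×m}`, every nonzero eigenvector `v` of `D` satisfies `Bᵀ·v ≠ 0` iff, for every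
`λ ∈ ℝ`, the rows of `B` indexed by the entries of `d` equal to `λ` are linearly
independent. -/
theorem pbh_diagonal_iff_rows_linearIndependent (n m : ℕ) (d : Fin n → ℝ)
    (B : Matrix (Fin n) (Fin m) ℝ) :
    (∀ (lam : ℝ) (v : Fin n → ℝ), v ≠ 0 → Matrix.diagonal d *ᵥ v = lam • v →
        Bᵀ *ᵥ v ≠ 0) ↔
      (∀ lam : ℝ, LinearIndependent ℝ (fun i : {i : Fin n // d i = lam} => B i.1)) := by
  constructor
  · intro h lam
    rw [Fintype.linearIndependent_iff]
    intro g hg i0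
    by_contra hne
    set v : Fin n → ℝ := fun i => if hi : d i = lam then g ⟨i, hi⟩ else 0 with hv
    have hv0 : v ≠ 0 := by
      intro h0
      apply hne
      have := congrFun h0 i0.1
      simpa [v, i0.2] using this
    have heig : Matrix.diagonal d *ᵥ v = lam • v := by
      funext i
      simp only [Matrix.mulVec_diagonal, Pi.smul_apply, smul_eq_mul, v]
      split_ifs with hd
      · rw [hd]
      · ring
    have hBv : Bᵀ *ᵥ v = 0 := by
      funext j
      have hsum : ∑ i : Fin n, v i * B i j
          = ∑ i ∈ Finset.univ.filter (fun i => d i = lam), v i * B i j := by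
        refine (Finset.sum_subset (Finset.filter_subset _ _) ?_).symm
        intro i _ hi
        have hdi : ¬ d i = lam := by simpa using hi
        simp [v, hdi]
      have hsub : ∑ i ∈ Finset.univ.filter (fun i => d i = lam), v i * B i j
          = ∑ i : {i : Fin n // d i = lam}, v i.1 * B i.1 j := by
        exact (Finset.sum_subtype _ (by simp) _)
      have hg' := congrFun hg j
      simp only [Finset.sum_apply, Pi.smul_apply, smul_eq_mul, Pi.zero_apply] at hg'
      have : (Bᵀ *ᵥ v) j = ∑ i : Fin n, v i * B i j := by
        simp [Matrix.mulVec, dotProduct, Matrix.transpose_apply, mul_comm]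
      rw [this, hsum, hsub]
      calc ∑ i : {i : Fin n // d i = lam}, v i.1 * B i.1 j
          = ∑ i : {i : Fin n // d i = lam}, g i * B i.1 j := by
            refine Finset.sum_congr rfl fun i _ => ?_
            simp [v, i.2]
        _ = 0 := hg'
    exact h lam v hv0 heig hBv
  · intro h lam v hv0 heig hBv
    have hsupp : ∀ i, d i ≠ lam → v i = 0 := by
      intro i hi
      have := congrFun heig i
      simp only [Matrix.mulVec_diagonal, Pi.smul_apply, smul_eq_mul] at this
      by_contra hvi
      exact hi (mul_right_cancel₀ hvi this)
    have hlin := Fintype.linearIndependent_iff.mp (h lam)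
      (fun i : {i : Fin n // d i = lam} => v i.1)
    apply hv0
    funext i
    by_cases hi : d i = lam
    · refine hlin ?_ ⟨i, hi⟩
      funext j
      have hBvj := congrFun hBv j
      simp only [Pi.zero_apply] at hBvj
      have : (Bᵀ *ᵥ v) j = ∑ i : Fin n, v i * B i j := by
        simp [Matrix.mulVec, dotProduct, Matrix.transpose_apply, mul_comm]
      rw [this] at hBvj
      have hsum : ∑ i : Fin n, v i * B i j
          = ∑ i ∈ Finset.univ.filter (fun i => d i = lam), v i * B i j := by
        refine (Finset.sum_subset (Finset.filter_subset _ _) ?_).symm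
        intro i _ hi
        have hdi : ¬ d i = lam := by simpa using hi
        simp [hsupp i hdi]
      have hsub : ∑ i ∈ Finset.univ.filter (fun i => d i = lam), v i * B i j
          = ∑ i : {i : Fin n // d i = lam}, v i.1 * B i.1 j := by
        exact (Finset.sum_subtype _ (by simp) _)
      simp only [Finset.sum_apply, Pi.smul_apply, smul_eq_mul, Pi.zero_apply]
      rw [← hsub, ← hsum]
      exact hBvj
    · exact hsupp i hi
end

section
/- Let G be a simple graph on n vertices with Laplacian matrix L, and let M be the maximum multiplicity of the eigenvalues of L, i.e., M = max over λ ∈ ℝ of dim{v ∈ ℝ^n : L·v = λ·v}. Then there exists a matrix B ∈ ℝ^{n×M} such that for every real number λ and every nonzero vector v ∈ ℝ^n with L·v = λ·v, one has Bᵀ·v ≠ 0. (By the PBH test, the Laplacian network ẋ = −Lx + Bu is controllable with M independent inputs; such a B can be obtained by summing appropriately padded groups of columns of a normalized modal matrix of L.) -/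
/-!
Eigenvectors of a symmetric matrix for distinct eigenvalues are orthogonal. So choose, for
every eigenvalue `μ`, a family `w μ : Fin M → ℝⁿ` spanning the eigenspace `E μ` (possible as
`dim E μ ≤ M`), and let the `j`-th column of `B` be `∑ μ, w μ j`. For an eigenvector `v` of
eigenvalue `μ`, the `j`-th entry of `Bᵀ v` is then `w μ j ⬝ᵥ v`; if these all vanish, `v` is
orthogonal to `span (w μ) ∋ v`, so `v = 0`.
-/

open Finset Matrix Module Module.End

theorem Submodule.exists_fin_le_span_of_finrank_le {K V : Type*} [DivisionRing K]
    [AddCommGroup V] [Module K V] (E : Submodule K V) [FiniteDimensional K E] {M : ℕ}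
    (hM : finrank K E ≤ M) :
    ∃ w : Fin M → V, (∀ j, w j ∈ E) ∧ E ≤ Submodule.span K (Set.range w) := by
  let b := Module.finBasis K E
  let w : Fin M → V := fun j => if h : (j : ℕ) < finrank K E then b ⟨j, h⟩ else 0
  refine ⟨w, fun j => ?_, fun x hx => ?_⟩
  · unfold w
    split_ifs
    exacts [(b _).2, E.zero_mem]
  · have hb : Set.range (E.subtype ∘ b) ⊆ Set.range w := by
      rintro _ ⟨i, rfl⟩
      exact ⟨Fin.castLE hM i, by simp [w]⟩
    refine Submodule.span_mono hb ?_
    rw [Set.range_comp, Submodule.span_image]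
    exact ⟨⟨x, hx⟩, b.mem_span _, rfl⟩

theorem Matrix.dotProduct_eq_zero_of_mem_span {R ι κ : Type*} [CommSemiring R] [Fintype ι]
    {w : κ → ι → R} {u v : ι → R} (hv : v ∈ Submodule.span R (Set.range w))
    (hw : ∀ j, w j ⬝ᵥ u = 0) : v ⬝ᵥ u = 0 := by
  induction hv using Submodule.span_induction with
  | mem x hx => obtain ⟨j, rfl⟩ := hx; exact hw j
  | zero => exact zero_dotProduct u
  | add x y _ _ hx hy => rw [add_dotProduct, hx, hy, add_zero]
  | smul c x _ hx => rw [smul_dotProduct, hx, smul_zero]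

theorem Matrix.IsSymm.dotProduct_eq_zero_of_mem_eigenspace {R ι : Type*} [CommRing R]
    [NoZeroDivisors R] [Fintype ι] [DecidableEq ι] {A : Matrix ι ι R} (hA : A.IsSymm)
    {μ ν : R} {u v : ι → R} (hu : u ∈ eigenspace (toLin' A) μ)
    (hv : v ∈ eigenspace (toLin' A) ν) (hμν : μ ≠ ν) : u ⬝ᵥ v = 0 := by
  rw [mem_eigenspace_iff, toLin'_apply] at hu hv
  have h : μ * (u ⬝ᵥ v) = ν * (u ⬝ᵥ v) := by
    calc μ * (u ⬝ᵥ v) = (A *ᵥ u) ⬝ᵥ v := by rw [hu, smul_dotProduct, smul_eq_mul]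
      _ = u ⬝ᵥ (A *ᵥ v) := by rw [dotProduct_mulVec, ← mulVec_transpose, hA.eq]
      _ = ν * (u ⬝ᵥ v) := by rw [hv, dotProduct_smul, smul_eq_mul]
  exact (mul_eq_mul_right_iff.mp h).resolve_left hμν

theorem Matrix.IsSymm.exists_transpose_mulVec_ne_zero_of_finrank_eigenspace_le {R ι : Type*}
    [Field R] [LinearOrder R] [IsStrictOrderedRing R] [Fintype ι] [DecidableEq ι]
    {A : Matrix ι ι R} (hA : A.IsSymm) {M : ℕ}
    (hM : ∀ μ, finrank R (eigenspace (toLin' A) μ) ≤ M) :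
    ∃ B : Matrix ι (Fin M) R, ∀ (μ : R) (v : ι → R), v ≠ 0 →
      A *ᵥ v = μ • v → Bᵀ *ᵥ v ≠ 0 := by
  choose w hwE hwspan using fun μ =>
    (eigenspace (toLin' A) μ).exists_fin_le_span_of_finrank_le (hM μ)
  let S := (finite_hasEigenvalue (toLin' A)).toFinset
  refine ⟨(Matrix.of fun j => ∑ μ ∈ S, w μ j)ᵀ, fun μ v hv0 hv hBv => hv0 ?_⟩
  have hvE : v ∈ eigenspace (toLin' A) μ := by rwa [mem_eigenspace_iff, toLin'_apply]
  have hμS : μ ∈ S := by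
    simpa [S] using hasEigenvalue_of_hasEigenvector ⟨hvE, hv0⟩
  have hw : ∀ j, w μ j ⬝ᵥ v = 0 := fun j => by
    have hBvj : ∑ ν ∈ S, w ν j ⬝ᵥ v = 0 := by
      rw [← sum_dotProduct]
      simpa [mulVec, ← Finset.sum_apply] using congrFun hBv j
    rwa [sum_eq_single_of_mem μ hμS fun ν _ hνμ =>
      hA.dotProduct_eq_zero_of_mem_eigenspace (hwE ν j) hvE hνμ] at hBvj
  exact dotProduct_self_eq_zero.mp (dotProduct_eq_zero_of_mem_span (hwspan μ hvE) hw)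

/-- for a simple graph `G` on `n` vertices with Laplacian `L`, letting `M` be
the maximum multiplicity of the eigenvalues of `L` (the largest dimension of an eigenspace),
there exists `B ∈ ℝ^{n×M}` such that every nonzero eigenvector `v` of `L` satisfies
`Bᵀ·v ≠ 0`; by the PBH test, the Laplacian network is controllable with `M` inputs. -/
theorem lapMatrix_controllable_with_max_multiplicity_inputs (n : ℕ)
    (G : SimpleGraph (Fin n)) [DecidableRel G.Adj] (M : ℕ)
    (hM : M = ⨆ lam : ℝ, Module.finrank ℝ
      ↥(Module.End.eigenspace (Matrix.toLin' (G.lapMatrix ℝ)) lam)) :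
    ∃ B : Matrix (Fin n) (Fin M) ℝ, ∀ (lam : ℝ) (v : Fin n → ℝ), v ≠ 0 →
      G.lapMatrix ℝ *ᵥ v = lam • v → Bᵀ *ᵥ v ≠ 0 := by
  have hbdd : BddAbove (Set.range fun lam : ℝ =>
      finrank ℝ (eigenspace (toLin' (G.lapMatrix ℝ)) lam)) := by
    refine ⟨n, Set.forall_mem_range.mpr fun lam => ?_⟩
    simpa using Submodule.finrank_le (eigenspace (toLin' (G.lapMatrix ℝ)) lam)
  exact (G.isSymm_lapMatrix ℝ).exists_transpose_mulVec_ne_zero_of_finrank_eigenspace_le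
    fun lam => hM ▸ le_ciSup hbdd lam
end
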